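/- Let f₁ : Δ² → Δ be holomorphic and define φ : Δ → Δ by φ(ξ) = f₁(ξ, ξ). Then liminf_{t → 1⁻} (1 - |f₁(t,t)|)/(1 - t) = liminf_{ξ → 1} (1 - |φ(ξ)|)/(1 - |ξ|), i.e. the boundary dilatation coefficient of φ at 1 equals the liminf of the Julia quotient of f₁ along the diagonal radial direction. -/

import Mathlib

open Complex Metric Set Filter

noncomputable def mb (a z : ℂ) : ℂ := (z - a) / (1 - (starRingEnd ℂ) a * z)

theorem mb_normSq_key (a z : ℂ) :
    normSq (1 - (starRingEnd ℂ) a * z) = normSq (z - a) + (1 - normSq a) * (1 - normSq z) := by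
  simp only [normSq_apply, sub_re, sub_im, mul_re, mul_im, one_re, one_im, conj_re, conj_im]
  ring

theorem mb_denom_ne (a z : ℂ) (ha : norm a < 1) (hz : norm z < 1) :
    1 - (starRingEnd ℂ) a * z ≠ 0 := by
  intro h
  have h1 : (1 : ℂ) = (starRingEnd ℂ) a * z := by linear_combination h
  have := congrArg norm h1
  simp only [norm_one, norm_mul, Complex.norm_conj] at this
  nlinarith [norm_nonneg a, norm_nonneg z]

theorem mb_mem (a z : ℂ) (ha : norm a < 1) (hz : norm z < 1) :
    norm (mb a z) < 1 := by
  have hd := mb_denom_ne a z ha hz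
  have hlt : normSq (z - a) < normSq (1 - (starRingEnd ℂ) a * z) := by
    rw [mb_normSq_key]
    have h1 : normSq a < 1 := by rw [← Complex.sq_norm]; nlinarith [norm_nonneg a]
    have h2 : normSq z < 1 := by rw [← Complex.sq_norm]; nlinarith [norm_nonneg z]
    nlinarith
  rw [mb, norm_div, div_lt_one (norm_pos_iff.mpr hd), Complex.norm_def, Complex.norm_def]
  exact Real.sqrt_lt_sqrt (normSq_nonneg _) hlt

theorem mb_one_sub_normSq (a z : ℂ) (ha : norm a < 1) (hz : norm z < 1) :
    1 - normSq (mb a z)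
      = (1 - normSq a) * (1 - normSq z) / normSq (1 - (starRingEnd ℂ) a * z) := by
  have hd := mb_denom_ne a z ha hz
  have hd' : normSq (1 - (starRingEnd ℂ) a * z) ≠ 0 := by
    simpa [Complex.normSq_eq_zero] using hd
  rw [mb, normSq_div, eq_div_iff hd', sub_mul, div_mul_cancel₀ _ hd']
  linear_combination mb_normSq_key a z

theorem mb_inv (a z : ℂ) (ha : norm a < 1) (hz : norm z < 1) :
    mb (-a) (mb a z) = z := by
  have hd := mb_denom_ne a z ha hz
  have hna : normSq a < 1 := by rw [← Complex.sq_norm]; nlinarith [norm_nonneg a]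
  have hns : ((normSq a : ℝ) : ℂ) = (starRingEnd ℂ) a * a := by
    rw [mul_comm]; exact (Complex.mul_conj a).symm
  have expand : mb a z * (1 - (starRingEnd ℂ) a * z) = z - a := by
    rw [mb, div_mul_cancel₀ _ hd]
  have key : (1 - (starRingEnd ℂ) (-a) * mb a z) * (1 - (starRingEnd ℂ) a * z)
      = 1 - (normSq a : ℂ) := by
    have hconj : (starRingEnd ℂ) (-a) = -((starRingEnd ℂ) a) := map_neg _ a
    calc (1 - (starRingEnd ℂ) (-a) * mb a z) * (1 - (starRingEnd ℂ) a * z)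
        = (1 - (starRingEnd ℂ) a * z) + (starRingEnd ℂ) a * (mb a z * (1 - (starRingEnd ℂ) a * z)) := by
          rw [hconj]; ring
      _ = (1 - (starRingEnd ℂ) a * z) + (starRingEnd ℂ) a * (z - a) := by rw [expand]
      _ = 1 - (normSq a : ℂ) := by rw [hns]; ring
  have hd2 : (1 - (starRingEnd ℂ) (-a) * mb a z) ≠ 0 := by
    intro h
    rw [h, zero_mul] at key
    have h2 : ((normSq a : ℝ) : ℂ) = 1 := by linear_combination key
    have h3 := congrArg Complex.re h2
    simp only [Complex.ofReal_re, Complex.one_re] at h3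
    linarith
  rw [mb, div_eq_iff hd2]
  apply mul_right_cancel₀ hd
  calc (mb a z - -a) * (1 - (starRingEnd ℂ) a * z)
      = mb a z * (1 - (starRingEnd ℂ) a * z) + a * (1 - (starRingEnd ℂ) a * z) := by ring
    _ = (z - a) + a * (1 - (starRingEnd ℂ) a * z) := by rw [expand]
    _ = z * (1 - (normSq a : ℂ)) := by rw [hns]; ring
    _ = z * ((1 - (starRingEnd ℂ) (-a) * mb a z) * (1 - (starRingEnd ℂ) a * z)) := by rw [key]
    _ = z * (1 - (starRingEnd ℂ) (-a) * mb a z) * (1 - (starRingEnd ℂ) a * z) := by ring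

theorem mb_diff (a : ℂ) (ha : norm a < 1) :
    DifferentiableOn ℂ (mb a) (ball (0:ℂ) 1) := by
  apply DifferentiableOn.div
  · exact (differentiable_id.sub_const a).differentiableOn
  · exact ((differentiable_const (1:ℂ)).sub ((differentiable_id).const_mul _)).differentiableOn
  · intro z hz
    exact mb_denom_ne a z ha (by simpa using mem_ball_zero_iff.mp hz)

theorem schwarz_pick {φ : ℂ → ℂ} (hd : DifferentiableOn ℂ φ (ball (0:ℂ) 1))
    (hm : MapsTo φ (ball (0:ℂ) 1) (ball (0:ℂ) 1))
    {a z : ℂ} (ha : norm a < 1) (hz : norm z < 1) :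
    norm (mb (φ a) (φ z)) ≤ norm (mb a z) := by
  have hab : a ∈ ball (0:ℂ) 1 := mem_ball_zero_iff.mpr (by simpa using ha)
  have hφa : norm (φ a) < 1 := by
    simpa using mem_ball_zero_iff.mp (hm hab)
  have hna : norm (-a) < 1 := by simpa using ha
  set g : ℂ → ℂ := fun w => mb (φ a) (φ (mb (-a) w)) with hg
  have habs : ∀ w : ℂ, w ∈ ball (0:ℂ) 1 → norm w < 1 := fun w hw => by
    simpa using mem_ball_zero_iff.mp hw
  have hmem : ∀ w : ℂ, norm w < 1 → w ∈ ball (0:ℂ) 1 := fun w hw =>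
    mem_ball_zero_iff.mpr (by simpa using hw)
  have hmapsInner : MapsTo (mb (-a)) (ball (0:ℂ) 1) (ball (0:ℂ) 1) := fun w hw =>
    hmem _ (mb_mem _ _ hna (habs _ hw))
  have hmapsOuter : MapsTo (mb (φ a)) (ball (0:ℂ) 1) (ball (0:ℂ) 1) := fun w hw =>
    hmem _ (mb_mem _ _ hφa (habs _ hw))
  have hgd : DifferentiableOn ℂ g (ball (0:ℂ) 1) := by
    apply DifferentiableOn.comp (DifferentiableOn.comp (mb_diff _ hφa) hd hm)
      (mb_diff _ hna) hmapsInner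
  have hgm : MapsTo g (ball (0:ℂ) 1) (ball (0:ℂ) 1) :=
    fun w hw => hmapsOuter (hm (hmapsInner hw))
  have hg0 : g 0 = 0 := by
    have h1 : mb (-a) 0 = a := by
      simp [mb]
    simp only [hg, h1]
    simp [mb, sub_self]
  have hw : norm (mb a z) < 1 := mb_mem _ _ ha hz
  have := Complex.norm_le_norm_of_mapsTo_ball hgd (hgm.mono_right ball_subset_closedBall) hg0 hw
  have heq : g (mb a z) = mb (φ a) (φ z) := by
    simp only [hg, mb_inv a z ha hz]
  rwa [heq] at this

theorem one_sub_mul_sq_le (u v : ℂ) (h : norm u * norm v ≤ 1) :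
    (1 - norm u * norm v)^2 ≤ normSq (1 - (starRingEnd ℂ) u * v) := by
  have htri : norm (1 : ℂ) ≤ norm (1 - (starRingEnd ℂ) u * v)
      + norm ((starRingEnd ℂ) u * v) := by
    have := norm_add_le (1 - (starRingEnd ℂ) u * v) ((starRingEnd ℂ) u * v)
    simpa using this
  rw [norm_one, norm_mul, Complex.norm_conj] at htri
  rw [← Complex.sq_norm]
  nlinarith [norm_nonneg (1 - (starRingEnd ℂ) u * v)]

theorem schwarz_pick_key {φ : ℂ → ℂ} (hd : DifferentiableOn ℂ φ (ball (0:ℂ) 1))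
    (hm : MapsTo φ (ball (0:ℂ) 1) (ball (0:ℂ) 1))
    {a z : ℂ} (ha : norm a < 1) (hz : norm z < 1) :
    (1 - norm (φ a) * norm (φ z))^2 * (1 - (norm z)^2)
      ≤ ((1 - (norm (φ a))^2) / (1 - (norm a)^2))
        * (1 - (norm (φ z))^2) * normSq (1 - (starRingEnd ℂ) a * z) := by
  have hmem : ∀ w : ℂ, norm w < 1 → w ∈ ball (0:ℂ) 1 := fun w hw =>
    mem_ball_zero_iff.mpr (by simpa using hw)
  have hφa : norm (φ a) < 1 := by
    simpa using mem_ball_zero_iff.mp (hm (hmem a ha))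
  have hφz : norm (φ z) < 1 := by
    simpa using mem_ball_zero_iff.mp (hm (hmem z hz))
  -- Schwarz–Pick in normSq form
  have hsp := schwarz_pick hd hm ha hz
  have hsp2 : normSq (mb (φ a) (φ z)) ≤ normSq (mb a z) := by
    rw [← Complex.sq_norm, ← Complex.sq_norm]
    exact pow_le_pow_left₀ (norm_nonneg _) hsp 2
  have h1 := mb_one_sub_normSq a z ha hz
  have h2 := mb_one_sub_normSq (φ a) (φ z) hφa hφz
  have hD : 0 < normSq (1 - (starRingEnd ℂ) a * z) :=
    Complex.normSq_pos.mpr (mb_denom_ne a z ha hz)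
  have hD' : 0 < normSq (1 - (starRingEnd ℂ) (φ a) * (φ z)) :=
    Complex.normSq_pos.mpr (mb_denom_ne _ _ hφa hφz)
  have hdivs : (1 - normSq a) * (1 - normSq z) / normSq (1 - (starRingEnd ℂ) a * z)
      ≤ (1 - normSq (φ a)) * (1 - normSq (φ z))
        / normSq (1 - (starRingEnd ℂ) (φ a) * (φ z)) := by
    rw [← h1, ← h2]; linarith
  have hsp3 : (1 - normSq a) * (1 - normSq z) * normSq (1 - (starRingEnd ℂ) (φ a) * (φ z))
      ≤ (1 - normSq (φ a)) * (1 - normSq (φ z)) * normSq (1 - (starRingEnd ℂ) a * z) :=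
    (div_le_div_iff₀ hD hD').mp hdivs
  have hlow := one_sub_mul_sq_le (φ a) (φ z)
    (by nlinarith [norm_nonneg (φ a), norm_nonneg (φ z)])
  have hA2 : 0 < 1 - (norm a)^2 := by nlinarith [norm_nonneg a]
  have hZ2 : 0 ≤ 1 - (norm z)^2 := by nlinarith [norm_nonneg z]
  rw [div_mul_eq_mul_div, div_mul_eq_mul_div, le_div_iff₀ hA2]
  have e1 : normSq a = (norm a)^2 := (Complex.sq_norm a).symm
  have e2 : normSq z = (norm z)^2 := (Complex.sq_norm z).symm
  have e3 : normSq (φ a) = (norm (φ a))^2 := (Complex.sq_norm (φ a)).symm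
  have e4 : normSq (φ z) = (norm (φ z))^2 := (Complex.sq_norm (φ z)).symm
  rw [e1, e2, e3, e4] at hsp3
  nlinarith [mul_le_mul_of_nonneg_right hlow (mul_nonneg hZ2 hA2.le), hsp3]

theorem julia_seq {φ : ℂ → ℂ} (hd : DifferentiableOn ℂ φ (ball (0:ℂ) 1))
    (hm : MapsTo φ (ball (0:ℂ) 1) (ball (0:ℂ) 1))
    {β : ℝ} (hβ : 0 ≤ β) {a : ℕ → ℂ}
    (hta : Filter.Tendsto a Filter.atTop (nhds (1:ℂ)))
    (hab : ∀ n, norm (a n) < 1)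
    (hub : ∀ n, (1 - norm (φ (a n))) / (1 - norm (a n)) < β)
    {z : ℂ} (hz : norm z < 1) :
    (1 - norm (φ z))^2 * (1 - (norm z)^2)
      ≤ β * (1 - (norm (φ z))^2) * normSq (1 - z) := by
  have hmem : ∀ w : ℂ, norm w < 1 → w ∈ ball (0:ℂ) 1 := fun w hw =>
    mem_ball_zero_iff.mpr (by simpa using hw)
  set r : ℕ → ℝ := fun n => norm (a n) with hr
  set s : ℕ → ℝ := fun n => norm (φ (a n)) with hs
  have hr1 : ∀ n, r n < 1 := hab
  have hr0 : ∀ n, 0 ≤ r n := fun n => norm_nonneg _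
  have hs1 : ∀ n, s n < 1 := fun n => by
    simpa using mem_ball_zero_iff.mp (hm (hmem _ (hab n)))
  have hs0 : ∀ n, 0 ≤ s n := fun n => norm_nonneg _
  have hsub : ∀ n, 1 - s n ≤ β * (1 - r n) := by
    intro n
    have h := hub n
    have hpos : 0 < 1 - r n := by linarith [hr1 n]
    rw [div_lt_iff₀ hpos] at h
    linarith
  -- limits
  have hrt : Filter.Tendsto r Filter.atTop (nhds 1) := by
    have : Filter.Tendsto (fun n => norm (a n)) Filter.atTop (nhds (norm (1:ℂ))) :=
      (continuous_norm.tendsto 1).comp hta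
    simpa using this
  have hst : Filter.Tendsto s Filter.atTop (nhds 1) := by
    have hlow : ∀ n, 1 - β * (1 - r n) ≤ s n := fun n => by linarith [hsub n]
    have h1 : Filter.Tendsto (fun n => 1 - β * (1 - r n)) Filter.atTop (nhds (1 - β * (1 - 1))) :=
      (tendsto_const_nhds.sub (tendsto_const_nhds.mul (tendsto_const_nhds.sub hrt)))
    have h1' : Filter.Tendsto (fun n => 1 - β * (1 - r n)) Filter.atTop (nhds 1) := by
      simpa using h1
    exact tendsto_of_tendsto_of_tendsto_of_le_of_le h1' tendsto_const_nhds
      hlow (fun n => (hs1 n).le)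
  set W : ℝ := norm (φ z) with hW
  set Z : ℝ := norm z with hZ
  have hW1 : W < 1 := by
    simpa using mem_ball_zero_iff.mp (hm (hmem _ hz))
  have hW0 : 0 ≤ W := norm_nonneg _
  -- per-n inequality
  have hn : ∀ n, (1 - s n * W)^2 * (1 - Z^2)
      ≤ β * ((1 + s n)/(1 + r n)) * ((1 - W^2) * normSq (1 - (starRingEnd ℂ) (a n) * z)) := by
    intro n
    have hkey := schwarz_pick_key hd hm (hab n) hz
    have hC : (1 - s n^2)/(1 - r n^2) ≤ β * (1 + s n)/(1 + r n) := by
      rw [div_le_div_iff₀ (by nlinarith [hr0 n, hr1 n]) (by nlinarith [hr0 n])]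
      nlinarith [mul_le_mul_of_nonneg_right (hsub n)
        (by nlinarith [hs0 n, hr0 n] : (0:ℝ) ≤ (1 + s n) * (1 + r n))]
    have hnn : 0 ≤ (1 - W^2) * normSq (1 - (starRingEnd ℂ) (a n) * z) :=
      mul_nonneg (by nlinarith) (normSq_nonneg _)
    calc (1 - s n * W)^2 * (1 - Z^2)
        ≤ ((1 - s n^2)/(1 - r n^2)) * (1 - W^2) * normSq (1 - (starRingEnd ℂ) (a n) * z) :=
          hkey
      _ ≤ (β * (1 + s n)/(1 + r n)) * (1 - W^2) * normSq (1 - (starRingEnd ℂ) (a n) * z) := by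
          have := mul_le_mul_of_nonneg_right hC hnn
          calc ((1 - s n^2)/(1 - r n^2)) * (1 - W^2) * normSq (1 - (starRingEnd ℂ) (a n) * z)
              = ((1 - s n^2)/(1 - r n^2)) * ((1 - W^2) * normSq (1 - (starRingEnd ℂ) (a n) * z)) := by ring
            _ ≤ (β * (1 + s n)/(1 + r n)) * ((1 - W^2) * normSq (1 - (starRingEnd ℂ) (a n) * z)) := this
            _ = (β * (1 + s n)/(1 + r n)) * (1 - W^2) * normSq (1 - (starRingEnd ℂ) (a n) * z) := by ring
      _ = β * ((1 + s n)/(1 + r n)) * ((1 - W^2) * normSq (1 - (starRingEnd ℂ) (a n) * z)) := by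
          ring
  -- limits of both sides
  have hNS : Filter.Tendsto (fun n => normSq (1 - (starRingEnd ℂ) (a n) * z)) Filter.atTop
      (nhds (normSq (1 - z))) := by
    have hcont : Continuous fun w : ℂ => normSq (1 - (starRingEnd ℂ) w * z) :=
      Complex.continuous_normSq.comp
        (continuous_const.sub (Complex.continuous_conj.mul continuous_const))
    have := (hcont.tendsto 1).comp hta
    rwa [map_one, one_mul] at this
  have hP : Filter.Tendsto (fun n => (1 - s n * W)^2 * (1 - Z^2)) Filter.atTop
      (nhds ((1 - 1 * W)^2 * (1 - Z^2))) := by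
    exact (((tendsto_const_nhds.sub (hst.mul tendsto_const_nhds)).pow 2).mul tendsto_const_nhds)
  have hQ : Filter.Tendsto
      (fun n => β * ((1 + s n)/(1 + r n)) * ((1 - W^2) * normSq (1 - (starRingEnd ℂ) (a n) * z)))
      Filter.atTop (nhds (β * ((1 + 1)/(1 + 1)) * ((1 - W^2) * normSq (1 - z)))) := by
    exact ((tendsto_const_nhds.mul ((tendsto_const_nhds.add hst).div
      (tendsto_const_nhds.add hrt) (by norm_num))).mul (tendsto_const_nhds.mul hNS))
  have hle := le_of_tendsto_of_tendsto' hP hQ hn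
  have : (1 - W)^2 * (1 - Z^2) ≤ β * ((1+1)/(1+1)) * ((1 - W^2) * normSq (1 - z)) := by
    simpa using hle
  calc (1 - W)^2 * (1 - Z^2) ≤ β * ((1+1)/(1+1)) * ((1 - W^2) * normSq (1 - z)) := this
    _ = β * (1 - W^2) * normSq (1 - z) := by norm_num; ring

theorem julia_radial {φ : ℂ → ℂ} (hd : DifferentiableOn ℂ φ (ball (0:ℂ) 1))
    (hm : MapsTo φ (ball (0:ℂ) 1) (ball (0:ℂ) 1))
    {β : ℝ} (hβ : 0 ≤ β) {a : ℕ → ℂ}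
    (hta : Filter.Tendsto a Filter.atTop (nhds (1:ℂ)))
    (hab : ∀ n, norm (a n) < 1)
    (hub : ∀ n, (1 - norm (φ (a n))) / (1 - norm (a n)) < β)
    {t : ℝ} (ht0 : 0 < t) (ht1 : t < 1) :
    (1 - norm (φ (t:ℂ))) / (1 - t) ≤ 2 * β / (1 + t) := by
  have hzt : norm ((t:ℂ)) < 1 := by
    rw [Complex.norm_real, Real.norm_eq_abs, abs_of_pos ht0]; exact ht1
  have hJ := julia_seq hd hm hβ hta hab hub hzt
  have hZ : norm ((t:ℂ)) = t := by rw [Complex.norm_real, Real.norm_eq_abs, abs_of_pos ht0]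
  have hNS : normSq (1 - (t:ℂ)) = (1 - t)^2 := by
    have : (1 - (t:ℂ)) = ((1 - t : ℝ) : ℂ) := by push_cast; ring
    rw [this, Complex.normSq_ofReal]; ring
  rw [hZ, hNS] at hJ
  set W : ℝ := norm (φ (t:ℂ)) with hWdef
  have hmem : (t:ℂ) ∈ ball (0:ℂ) 1 := mem_ball_zero_iff.mpr (by
    simpa using hzt)
  have hW1 : W < 1 := by
    simpa using mem_ball_zero_iff.mp (hm hmem)
  have hW0 : 0 ≤ W := norm_nonneg _
  have h1t : (0:ℝ) < 1 - t := by linarith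
  have h1t' : (0:ℝ) < 1 + t := by linarith
  have h1W : (0:ℝ) < 1 - W := by linarith
  -- from hJ : (1-W)^2 * (1-t^2) ≤ β * (1-W^2) * (1-t)^2
  have e : (1-W)*(1-t)*((1-W)*(1+t) - β*(1+W)*(1-t))
      = (1-W)^2*(1-t^2) - β*(1-W^2)*(1-t)^2 := by ring
  have step1 : (1-W)*(1-t)*((1-W)*(1+t) - β*(1+W)*(1-t)) ≤ 0 := by rw [e]; linarith
  have step2 : (1-W)*(1+t) - β*(1+W)*(1-t) ≤ 0 := by
    nlinarith [step1, mul_pos h1W h1t]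
  have hmain : (1 - W) * (1 + t) ≤ 2 * β * (1 - t) := by
    nlinarith [step2, mul_nonneg (mul_nonneg hβ h1t.le) h1W.le]
  rw [div_le_div_iff₀ h1t h1t']
  nlinarith [hmain]

theorem diagonal_liminf_eq
    (f₁ : ℂ × ℂ → ℂ)
    (hf₁ : DifferentiableOn ℂ f₁ (ball (0:ℂ) 1 ×ˢ ball (0:ℂ) 1))
    (hf₁m : MapsTo f₁ (ball (0:ℂ) 1 ×ˢ ball (0:ℂ) 1) (ball (0:ℂ) 1))
    (φ : ℂ → ℂ) (hφ : ∀ ξ : ℂ, φ ξ = f₁ (ξ, ξ)) :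
    Filter.liminf (fun t : ℝ => (1 - norm (f₁ ((t:ℂ), (t:ℂ)))) / (1 - t))
        (nhdsWithin 1 (Set.Iio (1:ℝ)))
      = Filter.liminf (fun ξ : ℂ => (1 - norm (φ ξ)) / (1 - norm ξ))
        (nhdsWithin 1 (ball (0:ℂ) 1)) := by
  have hφeq : φ = fun ξ : ℂ => f₁ (ξ, ξ) := funext hφ
  subst hφeq
  set φ' : ℂ → ℂ := fun ξ : ℂ => f₁ (ξ, ξ) with hφ'
  -- basic properties of the diagonal map
  have hdiag : DifferentiableOn ℂ (fun ξ : ℂ => ((ξ, ξ) : ℂ × ℂ)) (ball (0:ℂ) 1) :=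
    (differentiable_id.prodMk differentiable_id).differentiableOn
  have hdiagm : MapsTo (fun ξ : ℂ => ((ξ, ξ) : ℂ × ℂ)) (ball (0:ℂ) 1)
      (ball (0:ℂ) 1 ×ˢ ball (0:ℂ) 1) := fun ξ hξ => Set.mem_prod.mpr ⟨hξ, hξ⟩
  have hd' : DifferentiableOn ℂ φ' (ball (0:ℂ) 1) := hf₁.comp hdiag hdiagm
  have hm' : MapsTo φ' (ball (0:ℂ) 1) (ball (0:ℂ) 1) := fun ξ hξ => hf₁m (hdiagm hξ)
  set U : ℂ → ℝ := fun ξ => (1 - norm (φ' ξ)) / (1 - norm ξ) with hU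
  set V : ℝ → ℝ := fun t => (1 - norm (f₁ ((t:ℂ), (t:ℂ)))) / (1 - t) with hV
  set F := nhdsWithin (1:ℂ) (ball (0:ℂ) 1) with hF
  set G := nhdsWithin (1:ℝ) (Set.Iio (1:ℝ)) with hG
  rw [Filter.liminf_eq, Filter.liminf_eq]
  set A : Set ℝ := {x | ∀ᶠ ξ in F, x ≤ U ξ} with hA
  set B : Set ℝ := {x | ∀ᶠ t in G, x ≤ V t} with hB
  have hmemb : ∀ w : ℂ, w ∈ ball (0:ℂ) 1 ↔ norm w < 1 := fun w => by
    rw [mem_ball_zero_iff]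
  -- 0 ∈ A
  have h0A : (0:ℝ) ∈ A := by
    filter_upwards [eventually_mem_nhdsWithin] with ξ hξ
    have h1 : norm ξ < 1 := (hmemb ξ).mp hξ
    have h2 : norm (φ' ξ) < 1 := (hmemb _).mp (hm' hξ)
    exact div_nonneg (by linarith) (by linarith)
  -- the real segment (0,1) eventually in G
  have hGIoo : ∀ᶠ t in G, 0 < t ∧ t < 1 := by
    have h1 : ∀ᶠ t in G, t < 1 := by
      filter_upwards [eventually_mem_nhdsWithin] with t ht using ht
    have h2 : ∀ᶠ t in G, 0 < t :=
      (eventually_gt_nhds (by norm_num : (0:ℝ) < 1)).filter_mono nhdsWithin_le_nhds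
    exact h2.and h1
  -- the inclusion map ℝ → ℂ
  have htend : Filter.Tendsto (fun t : ℝ => (t:ℂ)) G F := by
    rw [tendsto_nhdsWithin_iff]
    constructor
    · exact (Complex.continuous_ofReal.tendsto 1).mono_left nhdsWithin_le_nhds
    · filter_upwards [hGIoo] with t ht
      rw [hmemb, Complex.norm_real, Real.norm_eq_abs, abs_of_pos ht.1]
      exact ht.2
  have hcongr : ∀ᶠ t in G, V t = U ((t:ℂ)) := by
    filter_upwards [hGIoo] with t ht
    simp only [hU, hV, Complex.norm_real, Real.norm_eq_abs, abs_of_pos ht.1]; rfl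
  have hAB : A ⊆ B := by
    intro x hx
    filter_upwards [htend.eventually hx, hcongr] with t h1 h2
    rw [h2]; exact h1
  -- key bound from Julia's lemma
  have hfreq_to_bound : ∀ β : ℝ, 0 ≤ β → (∃ᶠ ξ in F, U ξ < β) → ∀ x ∈ B, x ≤ β := by
    intro β hβ hfr x hx
    have hfr2 : ∃ᶠ ξ in F, ξ ∈ ball (0:ℂ) 1 ∧ U ξ < β :=
      (hfr.and_eventually eventually_mem_nhdsWithin).mono (fun ξ h => ⟨h.2, h.1⟩)
    obtain ⟨a, ha, hpa⟩ := Filter.exists_seq_forall_of_frequently hfr2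
    have hta : Filter.Tendsto a Filter.atTop (nhds (1:ℂ)) :=
      ha.mono_right nhdsWithin_le_nhds
    have hab : ∀ n, norm (a n) < 1 := fun n => (hmemb _).mp (hpa n).1
    have hub : ∀ n, (1 - norm (φ' (a n))) / (1 - norm (a n)) < β :=
      fun n => (hpa n).2
    have hVb : ∀ᶠ t in G, x ≤ 2 * β / (1 + t) := by
      filter_upwards [hGIoo, hx] with t ht hxt
      exact le_trans hxt (julia_radial hd' hm' hβ hta hab hub ht.1 ht.2)
    have h2 : Filter.Tendsto (fun t : ℝ => 2 * β / (1 + t)) G (nhds β) := by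
      have : Filter.Tendsto (fun t : ℝ => 2 * β / (1 + t)) (nhds 1) (nhds (2 * β / (1 + 1))) :=
        (tendsto_const_nhds.div (tendsto_const_nhds.add tendsto_id) (by norm_num))
      have h3 : Filter.Tendsto (fun t : ℝ => 2 * β / (1 + t)) G (nhds (2 * β / (1 + 1))) :=
        this.mono_left (hG ▸ nhdsWithin_le_nhds)
      norm_num at h3
      exact h3
    exact ge_of_tendsto h2 hVb
  by_cases hbdd : BddAbove A
  · have hAne : A.Nonempty := ⟨0, h0A⟩
    have hSup0 : 0 ≤ sSup A := le_csSup hbdd h0A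
    have hBle : ∀ x ∈ B, x ≤ sSup A := by
      intro x hx
      refine le_of_forall_pos_le_add ?_
      intro ε hε
      refine hfreq_to_bound (sSup A + ε) (by linarith) ?_ x hx
      by_contra h
      rw [Filter.not_frequently] at h
      have hmem : sSup A + ε ∈ A := h.mono (fun ξ hξ => not_lt.mp hξ)
      have := le_csSup hbdd hmem
      linarith
    exact le_antisymm (csSup_le ⟨0, hAB h0A⟩ hBle)
      (csSup_le_csSup ⟨sSup A, fun x hx => hBle x hx⟩ hAne hAB)
  · have hBbdd : ¬ BddAbove B := fun h => hbdd (BddAbove.mono hAB h)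
    rw [Real.sSup_of_not_bddAbove hbdd, Real.sSup_of_not_bddAbove hBbdd]
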